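/- Let x = (x₁,…,xₙ) ∈ Xⁿ. For every (v₁,…,vₙ) ∈ Dⁿ(X) and every a₁,…,aₙ ∈ 𝔄 with ‖Σᵢ aᵢ*aᵢ‖ ≤ 1, one has ‖Σᵢ ⟨xᵢ,vᵢ⟩aᵢ‖ ≤ ‖x‖^X_n. -/

import Mathlib

open scoped RightActions

/-- The December-2024 Mathlib `CStarModule` class (right `A`-module via `SMul Aᵐᵒᵖ E`),
restated verbatim since Mathlib's `CStarModule` now uses a different (left) action. -/
class OldCStarModule (A : outParam <| Type*) (E : Type*) [NonUnitalSemiring A] [StarRing A]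
    [Module ℂ A] [AddCommGroup E] [Module ℂ E] [PartialOrder A] [SMul Aᵐᵒᵖ E] [Norm A] [Norm E]
    extends Inner A E where
  inner_add_right {x} {y} {z} : inner x (y + z) = inner x y + inner x z
  inner_self_nonneg {x} : 0 ≤ inner x x
  inner_self {x} : inner x x = 0 ↔ x = 0
  inner_op_smul_right {a : A} {x y : E} : inner x (y <• a) = inner x y * a
  inner_smul_right_complex {z : ℂ} {x} {y} : inner x (z • y) = z • inner x y
  star_inner x y : star (inner x y) = inner y x
  norm_eq_sqrt_norm_inner_self x : ‖x‖ = √‖inner x x‖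

variable (A : Type*) {E : Type*} [NonUnitalCStarAlgebra A] [PartialOrder A] [StarOrderedRing A]
  [NormedAddCommGroup E] [Module ℂ E] [SMul Aᵐᵒᵖ E] [OldCStarModule A E]

/-- `Dⁿ(X)`: the set of mutually orthogonal `n`-tuples `(v₁,…,vₙ)` in `X` such that each
`⟨vᵢ,vᵢ⟩` is a projection in `𝔄`. -/
def Dn (n : ℕ) : Set (Fin n → E) :=
  {v | (∀ i j, i ≠ j → (inner A (v i) (v j) : A) = 0) ∧
    ∀ i, IsSelfAdjoint (inner A (v i) (v i) : A) ∧
      IsIdempotentElem (inner A (v i) (v i) : A)}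

/-- A projection on the Hilbert `A`-module `E`: a bounded `A`-linear idempotent map which is
self-adjoint with respect to the `A`-valued inner product. -/
def IsProjectionOp (P : E →L[ℂ] E) : Prop :=
  (∀ (a : A) (v : E), P (MulOpposite.op a • v) = MulOpposite.op a • P v) ∧
  (∀ v : E, P (P v) = P v) ∧
  (∀ v w : E, (inner A (P v) w : A) = inner A v (P w))

/-- The Hilbert C*-multi-norm `‖x‖^X_n`. -/
noncomputable def hilbertCStarMultiNorm (n : ℕ) (x : Fin n → E) : ℝ :=
  sSup {r : ℝ | ∃ P : Fin n → E →L[ℂ] E, (∀ i, IsProjectionOp A (P i)) ∧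
    (∀ i j, i ≠ j → ∀ v, P i (P j v) = 0) ∧ (∀ v, ∑ i, P i v = v) ∧
    r = ‖∑ i, P i (x i)‖}

attribute [simp] OldCStarModule.inner_add_right OldCStarModule.star_inner
  OldCStarModule.inner_op_smul_right OldCStarModule.inner_smul_right_complex

namespace OldCStarModule

section general

variable {A}

@[simp]
lemma inner_add_left {x y z : E} : inner A (x + y) z = inner A x z + inner A y z := by
  rw [← star_star (r := inner A (x + y) z)]
  simp only [OldCStarModule.inner_add_right, star_add, OldCStarModule.star_inner]

@[simp]
lemma inner_op_smul_left {a : A} {x y : E} : inner A (x <• a) y = star a * inner A x y := by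
  rw [← OldCStarModule.star_inner, OldCStarModule.inner_op_smul_right, star_mul,
    OldCStarModule.star_inner]

@[simp]
lemma inner_smul_left_complex {z : ℂ} {x y : E} : inner A (z • x) y = star z • inner A x y := by
  rw [← OldCStarModule.star_inner]
  simp

@[simp]
lemma inner_smul_left_real {z : ℝ} {x y : E} : inner A (z • x) y = z • inner A x y := by
  have h₁ : z • x = (z : ℂ) • x := by simp
  rw [h₁, ← OldCStarModule.star_inner, OldCStarModule.inner_smul_right_complex]
  simp

@[simp]
lemma inner_smul_right_real {z : ℝ} {x y : E} : inner A x (z • y) = z • inner A x y := by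
  have h₁ : z • y = (z : ℂ) • y := by simp
  rw [h₁, ← OldCStarModule.star_inner, inner_smul_left_complex]
  simp

/-- The function `⟨x, y⟩ ↦ ⟪x, y⟫` bundled as a sesquilinear map. -/
def innerₛₗ : E →ₗ⋆[ℂ] E →ₗ[ℂ] A where
  toFun x := { toFun := fun y => inner A x y
               map_add' := fun z y => by simp
               map_smul' := fun z y => by simp }
  map_add' z y := by ext; simp
  map_smul' z y := by ext; simp

lemma innerₛₗ_apply {x y : E} : innerₛₗ x y = inner A x y := rfl

@[simp] lemma inner_zero_right {x : E} : inner A x 0 = 0 := by simp [← innerₛₗ_apply]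
@[simp] lemma inner_zero_left {x : E} : inner A 0 x = 0 := by simp [← innerₛₗ_apply]
@[simp] lemma inner_sub_right {x y z : E} : inner A x (y - z) = inner A x y - inner A x z := by
  simp [← innerₛₗ_apply]
@[simp] lemma inner_sub_left {x y z : E} : inner A (x - y) z = inner A x z - inner A y z := by
  simp [← innerₛₗ_apply]

@[simp]
lemma inner_sum_right {ι : Type*} {s : Finset ι} {x : E} {y : ι → E} :
    inner A x (∑ i ∈ s, y i) = ∑ i ∈ s, inner A x (y i) :=
  map_sum (innerₛₗ x) ..

@[simp]
lemma inner_sum_left {ι : Type*} {s : Finset ι} {x : ι → E} {y : E} :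
    inner A (∑ i ∈ s, x i) y = ∑ i ∈ s, inner A (x i) y :=
  map_sum (innerₛₗ.flip y) ..

lemma norm_sq_eq {x : E} : ‖x‖ ^ 2 = ‖inner A x x‖ := by
  simp [OldCStarModule.norm_eq_sqrt_norm_inner_self (A := A)]

lemma inner_mul_inner_swap_le {x y : E} :
    inner A y x * inner A x y ≤ ‖x‖ ^ 2 • inner A y y := by
  rcases eq_or_ne x 0 with h | h
  · simp [h]
  · have h₁ : ∀ (a : A),
        (0 : A) ≤ ‖x‖ ^ 2 • (star a * a) - ‖x‖ ^ 2 • (star a * inner A x y)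
                  - ‖x‖ ^ 2 • (inner A y x * a) + ‖x‖ ^ 2 • (‖x‖ ^ 2 • inner A y y) := fun a => by
      calc (0 : A) ≤ inner A (x <• a - ‖x‖ ^ 2 • y) (x <• a - ‖x‖ ^ 2 • y) := by
                      exact OldCStarModule.inner_self_nonneg
            _ = star a * (inner A x x * a) - ‖x‖ ^ 2 • (star a * inner A x y)
                  - ‖x‖ ^ 2 • (inner A y x * a) + ‖x‖ ^ 2 • (‖x‖ ^ 2 • inner A y y) := by
                      simp only [inner_sub_right, OldCStarModule.inner_op_smul_right,
                        inner_sub_left, inner_op_smul_left, inner_smul_left_real, mul_sub,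
                        mul_smul_comm, inner_smul_right_real, smul_sub, sub_mul, smul_mul_assoc, mul_assoc]
                      abel
            _ ≤ ‖x‖ ^ 2 • (star a * a) - ‖x‖ ^ 2 • (star a * inner A x y)
                  - ‖x‖ ^ 2 • (inner A y x * a) + ‖x‖ ^ 2 • (‖x‖ ^ 2 • inner A y y) := by
                      gcongr
                      calc _ = star a * inner A x x * a := (mul_assoc _ _ _).symm
                        _ ≤ ‖inner A x x‖ • (star a * a) :=
                          CStarAlgebra.star_left_conjugate_le_norm_smul
                            (OldCStarModule.star_inner x x)
                        _ = (√‖inner A x x‖) ^ 2 • (star a * a) := by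
                          rw [Real.sq_sqrt]
                          positivity
                        _ = ‖x‖ ^ 2 • (star a * a) := by
                          rw [← OldCStarModule.norm_eq_sqrt_norm_inner_self]
    specialize h₁ (inner A x y)
    simp only [OldCStarModule.star_inner, sub_self, zero_sub, le_neg_add_iff_add_le,
      add_zero] at h₁
    rwa [smul_le_smul_iff_of_pos_left (pow_pos (norm_pos_iff.mpr h) _)] at h₁

variable (E) in
lemma norm_inner_le {x y : E} : ‖inner A x y‖ ≤ ‖x‖ * ‖y‖ := by
  have := calc ‖inner A x y‖ ^ 2 = ‖inner A y x * inner A x y‖ := by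
                rw [← OldCStarModule.star_inner x y, CStarRing.norm_star_mul_self, pow_two]
    _ ≤ ‖‖x‖ ^ 2 • inner A y y‖ := by
                refine CStarAlgebra.norm_le_norm_of_nonneg_of_le ?_ inner_mul_inner_swap_le
                rw [← OldCStarModule.star_inner x y]
                exact star_mul_self_nonneg (inner A x y)
    _ = ‖x‖ ^ 2 * ‖inner A y y‖ := by simp [norm_smul]
    _ = ‖x‖ ^ 2 * ‖y‖ ^ 2 := by
                simp only [OldCStarModule.norm_eq_sqrt_norm_inner_self (A := A), norm_nonneg,
                  Real.sq_sqrt]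
    _ = (‖x‖ * ‖y‖) ^ 2 := by simp only [mul_pow]
  refine (pow_le_pow_iff_left₀ (norm_nonneg (inner A x y)) ?_ (by simp)).mp this
  exact mul_nonneg (norm_nonneg _) (norm_nonneg _)

end general

end OldCStarModule

section Aux

variable {A}

namespace CStarModuleAux

open OldCStarModule

lemma innerExt {z w : E} (h : ∀ y : E, (inner A y z : A) = inner A y w) : z = w := by
  have h0 : (inner A (z - w) (z - w) : A) = 0 := by
    rw [OldCStarModule.inner_sub_right, OldCStarModule.inner_sub_left, OldCStarModule.inner_sub_left, h z, h w]
    abel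
  exact sub_eq_zero.mp (OldCStarModule.inner_self.mp h0)

lemma op_smul_zero' (x : E) : x <• (0 : A) = 0 :=
  innerExt (A := A) fun y => by
    simp only [OldCStarModule.inner_op_smul_right, mul_zero, OldCStarModule.inner_zero_right]

lemma op_smul_add (x : E) (a b : A) : x <• (a + b) = x <• a + x <• b :=
  innerExt (A := A) fun y => by
    simp only [OldCStarModule.inner_op_smul_right, OldCStarModule.inner_add_right, mul_add]

lemma op_smul_add_vec (x y : E) (b : A) : (x + y) <• b = x <• b + y <• b :=
  innerExt (A := A) fun w => by
    simp only [OldCStarModule.inner_op_smul_right, OldCStarModule.inner_add_right, add_mul]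

lemma op_smul_sub (x y : E) (b : A) : (x - y) <• b = x <• b - y <• b :=
  innerExt (A := A) fun w => by
    simp only [OldCStarModule.inner_op_smul_right, OldCStarModule.inner_sub_right, sub_mul]

lemma op_smul_sum {ι : Type*} (s : Finset ι) (f : ι → E) (b : A) :
    (∑ i ∈ s, f i) <• b = ∑ i ∈ s, (f i) <• b :=
  innerExt (A := A) fun w => by
    simp only [OldCStarModule.inner_op_smul_right, OldCStarModule.inner_sum_right, Finset.sum_mul]

lemma op_smul_complex_smul (x : E) (c : ℂ) (a : A) : x <• (c • a) = c • (x <• a) :=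
  innerExt (A := A) fun y => by
    simp only [OldCStarModule.inner_op_smul_right, OldCStarModule.inner_smul_right_complex,
      mul_smul_comm]

lemma CStarModuleAux.op_smul_op_smul (x : E) (a b : A) : (x <• a) <• b = x <• (a * b) :=
  innerExt (A := A) fun y => by
    simp only [OldCStarModule.inner_op_smul_right, mul_assoc]

lemma norm_op_smul_le (x : E) (a : A) : ‖x <• a‖ ≤ ‖x‖ * ‖a‖ := by
  have h2 : ‖x <• a‖ ^ 2 = ‖star a * ((inner A x x : A) * a)‖ := by
    rw [OldCStarModule.norm_sq_eq]
    congr 1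
    rw [OldCStarModule.inner_op_smul_left, OldCStarModule.inner_op_smul_right]
  have hb : ‖star a * ((inner A x x : A) * a)‖ ≤ ‖a‖ * (‖x‖ ^ 2 * ‖a‖) := by
    calc ‖star a * ((inner A x x : A) * a)‖ ≤ ‖star a‖ * ‖(inner A x x : A) * a‖ := norm_mul_le _ _
      _ ≤ ‖star a‖ * (‖(inner A x x : A)‖ * ‖a‖) := by
          gcongr
          exact norm_mul_le _ _
      _ = ‖a‖ * (‖x‖ ^ 2 * ‖a‖) := by rw [norm_star, OldCStarModule.norm_sq_eq]
  have h3 : ‖x <• a‖ ^ 2 ≤ (‖x‖ * ‖a‖) ^ 2 := by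
    rw [h2]
    calc ‖star a * ((inner A x x : A) * a)‖ ≤ ‖a‖ * (‖x‖ ^ 2 * ‖a‖) := hb
      _ = (‖x‖ * ‖a‖) ^ 2 := by ring
  exact (pow_le_pow_iff_left₀ (norm_nonneg _) (by positivity) (by norm_num)).mp h3

/-- Conjugation by a projection decreases `star a * a`. -/
lemma conj_proj_le {p : A} (hsa : star p = p) (hid : p * p = p) (a : A) :
    star a * (p * a) ≤ star a * a := by
  have key : star a * a - star a * (p * a) = star (a - p * a) * (a - p * a) := by
    have h1 : star (a - p * a) = star a - star a * p := by rw [star_sub, star_mul, hsa]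
    rw [h1, sub_mul, mul_sub, mul_sub, mul_assoc, mul_assoc, ← mul_assoc p p a, hid]
    abel
  have h2 := star_mul_self_nonneg (a - p * a)
  rw [← key] at h2
  exact sub_nonneg.mp h2

variable [CompleteSpace E]

/-- The "rank-one" operator `z ↦ u <• ⟪u, z⟫`. -/
noncomputable def rankOne (A : Type*) {E : Type*} [NonUnitalCStarAlgebra A] [PartialOrder A]
    [StarOrderedRing A] [NormedAddCommGroup E] [Module ℂ E] [SMul Aᵐᵒᵖ E] [OldCStarModule A E]
    (u : E) : E →L[ℂ] E :=
  LinearMap.mkContinuous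
    { toFun := fun z => u <• (inner A u z : A)
      map_add' := fun y z => by
        rw [OldCStarModule.inner_add_right, op_smul_add]
      map_smul' := fun c z => by
        rw [RingHom.id_apply, OldCStarModule.inner_smul_right_complex, op_smul_complex_smul] }
    (‖u‖ * ‖u‖)
    (fun z => by
      calc ‖u <• (inner A u z : A)‖ ≤ ‖u‖ * ‖(inner A u z : A)‖ := norm_op_smul_le u _
        _ ≤ ‖u‖ * (‖u‖ * ‖z‖) := by
            gcongr
            exact OldCStarModule.norm_inner_le E
        _ = ‖u‖ * ‖u‖ * ‖z‖ := by ring)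

@[simp] lemma rankOne_apply (u z : E) : rankOne A u z = u <• (inner A u z : A) := rfl

end CStarModuleAux

end Aux

open CStarModuleAux OldCStarModule


/-- For every `(v₁,…,vₙ) ∈ Dⁿ(X)` and `a₁,…,aₙ ∈ 𝔄` with `‖Σᵢ aᵢ*aᵢ‖ ≤ 1`,
`‖Σᵢ ⟨xᵢ,vᵢ⟩aᵢ‖ ≤ ‖x‖^X_n`. -/
theorem norm_sum_inner_smul_le_hilbertCStarMultiNorm [CompleteSpace E]
    (n : ℕ) (x : Fin n → E) (v : Fin n → E) (hv : v ∈ Dn A n)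
    (a : Fin n → A) (ha : ‖∑ i, star (a i) * a i‖ ≤ 1) :
    ‖∑ i, (inner A (x i) (v i) : A) * a i‖ ≤ hilbertCStarMultiNorm A n x := by
  classical
  rw [hilbertCStarMultiNorm]
  set S : Set ℝ := {r : ℝ | ∃ P : Fin n → E →L[ℂ] E, (∀ i, IsProjectionOp A (P i)) ∧
    (∀ i j, i ≠ j → ∀ v, P i (P j v) = 0) ∧ (∀ v, ∑ i, P i v = v) ∧
    r = ‖∑ i, P i (x i)‖} with hSdef
  -- the set is bounded above by `∑ i, ‖x i‖`
  have hbdd : BddAbove S := by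
    refine ⟨∑ i, ‖x i‖, fun r hr => ?_⟩
    rw [hSdef] at hr
    obtain ⟨P, hP, -, -, rfl⟩ := hr
    calc ‖∑ i, P i (x i)‖ ≤ ∑ i, ‖P i (x i)‖ := norm_sum_le _ _
      _ ≤ ∑ i, ‖x i‖ := by
          refine Finset.sum_le_sum fun i _ => ?_
          obtain ⟨-, hidem, hsa⟩ := hP i
          have h2 : ‖P i (x i)‖ ^ 2 ≤ ‖x i‖ * ‖P i (x i)‖ := by
            calc ‖P i (x i)‖ ^ 2 = ‖(inner A (P i (x i)) (P i (x i)) : A)‖ :=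
                  OldCStarModule.norm_sq_eq
              _ = ‖(inner A (x i) (P i (P i (x i))) : A)‖ := by rw [hsa]
              _ = ‖(inner A (x i) (P i (x i)) : A)‖ := by rw [hidem]
              _ ≤ ‖x i‖ * ‖P i (x i)‖ := OldCStarModule.norm_inner_le E
          nlinarith [norm_nonneg (P i (x i)), norm_nonneg (x i)]
  rcases Nat.eq_zero_or_pos n with hn | hn
  · subst hn
    simp only [Finset.univ_eq_empty, Finset.sum_empty, norm_zero]
    refine Real.sSup_nonneg fun r hr => ?_
    rw [hSdef] at hr
    obtain ⟨P, -, -, -, rfl⟩ := hr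
    positivity
  -- main case: `n ≥ 1`
  obtain ⟨horth, hproj⟩ := hv
  have hsa : ∀ i, star (inner A (v i) (v i) : A) = inner A (v i) (v i) :=
    fun i => (hproj i).1.star_eq
  have hidem : ∀ i, (inner A (v i) (v i) : A) * inner A (v i) (v i) = inner A (v i) (v i) :=
    fun i => (hproj i).2
  -- `v i <• ⟪v i, v i⟫ = v i`
  have hvp : ∀ i, (v i) <• (inner A (v i) (v i) : A) = v i := by
    intro i
    have key : (inner A ((v i) <• (inner A (v i) (v i) : A) - v i)
        ((v i) <• (inner A (v i) (v i) : A) - v i) : A) = 0 := by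
      simp only [OldCStarModule.inner_sub_left, OldCStarModule.inner_sub_right, OldCStarModule.inner_op_smul_left, OldCStarModule.inner_op_smul_right,
        hsa i, mul_assoc, hidem i]
      simp
    exact sub_eq_zero.mp (OldCStarModule.inner_self.mp key)
  set P : Fin n → E →L[ℂ] E := fun i => rankOne A (v i) with hPdef
  have hPapply : ∀ i z, P i z = (v i) <• (inner A (v i) z : A) := by
    intro i z
    simp only [hPdef, rankOne_apply]
  -- action of `P i` on `v j <• b`
  have hPv : ∀ i j (b : A), P i ((v j) <• b) = if i = j then (v j) <• b else 0 := by
    intro i j b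
    rcases eq_or_ne i j with rfl | hij
    · rw [if_pos rfl, hPapply, OldCStarModule.inner_op_smul_right, ← CStarModuleAux.op_smul_op_smul, hvp i]
    · rw [if_neg hij, hPapply, OldCStarModule.inner_op_smul_right, horth i j hij, zero_mul, op_smul_zero']
  -- basic properties of the `P i`
  have hPA : ∀ i (b : A) z, P i (z <• b) = (P i z) <• b := by
    intro i b z
    rw [hPapply, hPapply, OldCStarModule.inner_op_smul_right, CStarModuleAux.op_smul_op_smul]
  have hPo : ∀ i j, i ≠ j → ∀ z, P i (P j z) = 0 := by
    intro i j hij z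
    have h := hPv i j (inner A (v j) z : A)
    rw [if_neg hij] at h
    rw [hPapply j z]
    exact h
  have hPP : ∀ i z, P i (P i z) = P i z := by
    intro i z
    have h := hPv i i (inner A (v i) z : A)
    rw [if_pos rfl] at h
    rw [hPapply i z]
    exact h
  have hPsa : ∀ i (y z : E), (inner A (P i y) z : A) = inner A y (P i z) := by
    intro i y z
    simp only [hPapply, OldCStarModule.inner_op_smul_left, OldCStarModule.inner_op_smul_right, OldCStarModule.star_inner]
  -- the complementary projection
  set Q : E →L[ℂ] E := ContinuousLinearMap.id ℂ E - ∑ i, P i with hQdef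
  have hQapply : ∀ z : E, Q z = z - ∑ i, P i z := by
    intro z
    simp only [hQdef, ContinuousLinearMap.coe_sub', Pi.sub_apply, ContinuousLinearMap.coe_id',
      id_eq, ContinuousLinearMap.coe_sum', Finset.sum_apply]
  have hQP : ∀ j z, Q (P j z) = 0 := by
    intro j z
    rw [hQapply]
    rw [Finset.sum_eq_single j (fun i _ hij => hPo i j hij z) (by simp), hPP, sub_self]
  have hPQ : ∀ j z, P j (Q z) = 0 := by
    intro j z
    rw [hQapply, map_sub, map_sum]
    rw [Finset.sum_eq_single j (fun i _ hij => hPo j i hij.symm z) (by simp), hPP, sub_self]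
  have hQQ : ∀ z, Q (Q z) = Q z := by
    intro z
    conv_lhs => rw [hQapply (Q z)]
    rw [Finset.sum_eq_zero fun i _ => hPQ i z, sub_zero]
  have hQA : ∀ (b : A) z, Q (z <• b) = (Q z) <• b := by
    intro b z
    rw [hQapply, hQapply, op_smul_sub, op_smul_sum]
    congr 1
    exact Finset.sum_congr rfl fun i _ => hPA i b z
  have hQsa : ∀ y z : E, (inner A (Q y) z : A) = inner A y (Q z) := by
    intro y z
    rw [hQapply, hQapply, OldCStarModule.inner_sub_left, OldCStarModule.inner_sub_right, OldCStarModule.inner_sum_left, OldCStarModule.inner_sum_right]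
    congr 1
    exact Finset.sum_congr rfl fun i _ => hPsa i y z
  -- the modified family summing to the identity
  set i₀ : Fin n := ⟨0, hn⟩ with hi₀
  set P' : Fin n → E →L[ℂ] E := fun i => if i = i₀ then P i + Q else P i with hP'def
  have hP'apply : ∀ i z, P' i z = P i z + (if i = i₀ then Q z else 0) := by
    intro i z
    by_cases h : i = i₀ <;> simp [hP'def, h]
  have hP'sum : ∀ z : E, ∑ i, P' i z = z := by
    intro z
    calc ∑ i, P' i z = ∑ i, (P i z + if i = i₀ then Q z else 0) :=
          Finset.sum_congr rfl fun i _ => hP'apply i z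
      _ = (∑ i, P i z) + Q z := by
          rw [Finset.sum_add_distrib, Finset.sum_ite_eq' Finset.univ i₀ fun _ => Q z]
          simp
      _ = z := by rw [hQapply]; abel
  have hP'eq : ∀ i, P' i = if i = i₀ then P i + Q else P i := fun i => by rw [hP'def]
  have hP'proj : ∀ i, IsProjectionOp A (P' i) := by
    intro i
    rw [hP'eq]
    by_cases h : i = i₀
    · rw [if_pos h]
      refine ⟨fun b z => ?_, fun z => ?_, fun y z => ?_⟩
    
      · simp only [ContinuousLinearMap.add_apply]
        rw [hPA, hQA, ← op_smul_add_vec]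
      · simp only [ContinuousLinearMap.add_apply, map_add]
        rw [hPP, hPQ, hQP, hQQ, add_zero, zero_add]
      · simp only [ContinuousLinearMap.add_apply, OldCStarModule.inner_add_left,
          OldCStarModule.inner_add_right, hPsa, hQsa]
    · rw [if_neg h]
      exact ⟨fun b z => hPA i b z, fun z => hPP i z, fun y z => hPsa i y z⟩
  have hP'orth : ∀ i j, i ≠ j → ∀ z, P' i (P' j z) = 0 := by
    intro i j hij z
    rw [hP'eq i, hP'eq j]
    by_cases hi : i = i₀
    · have hj : ¬ j = i₀ := fun h => hij (by rw [hi, h])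
      rw [if_pos hi, if_neg hj, ContinuousLinearMap.add_apply, hPo i j hij, hQP, add_zero]
    · by_cases hj : j = i₀
      · rw [if_neg hi, if_pos hj, ContinuousLinearMap.add_apply, map_add, hPo i j hij, hPQ,
          zero_add]
      · rw [if_neg hi, if_neg hj]
        exact hPo i j hij z
  -- membership of `‖∑ i, P' i (x i)‖` in `S`
  have hmem : ‖∑ i, P' i (x i)‖ ∈ S := by
    rw [hSdef]
    exact ⟨P', hP'proj, hP'orth, hP'sum, rfl⟩
  -- the vector `w`
  set w : E := ∑ j, (v j) <• (a j) with hwdef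
  have hP'v : ∀ i j, P' i ((v j) <• (a j)) = if i = j then (v j) <• (a j) else 0 := by
    intro i j
    have hQv : Q ((v j) <• (a j)) = 0 := by
      rw [hQapply]
      rw [Finset.sum_eq_single j (fun i _ hij => by rw [hPv i j (a j), if_neg hij]) (by simp),
        hPv j j (a j), if_pos rfl, sub_self]
    rw [hP'apply, hPv i j (a j), hQv]
    simp
  have hyw : (inner A (∑ i, P' i (x i)) w : A) = ∑ j, (inner A (x j) (v j) : A) * a j := by
    rw [hwdef, OldCStarModule.inner_sum_left]
    calc ∑ i, (inner A (P' i (x i)) (∑ j, (v j) <• (a j)) : A)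
        = ∑ i, ∑ j, (inner A (P' i (x i)) ((v j) <• (a j)) : A) :=
          Finset.sum_congr rfl fun i _ => OldCStarModule.inner_sum_right
      _ = ∑ i, ∑ j, (inner A (x i) (P' i ((v j) <• (a j))) : A) :=
          Finset.sum_congr rfl fun i _ => Finset.sum_congr rfl fun j _ =>
            (hP'proj i).2.2 (x i) _
      _ = ∑ i, ∑ j, (if i = j then (inner A (x i) ((v j) <• (a j)) : A) else 0) := by
          refine Finset.sum_congr rfl fun i _ => Finset.sum_congr rfl fun j _ => ?_
          rw [hP'v i j]
          by_cases h : i = j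
          · rw [if_pos h, if_pos h]
          · rw [if_neg h, if_neg h, OldCStarModule.inner_zero_right]
      _ = ∑ j, (inner A (x j) (v j) : A) * a j := by
          refine Finset.sum_congr rfl fun i _ => ?_
          rw [Finset.sum_ite_eq Finset.univ i fun j => (inner A (x i) ((v j) <• (a j)) : A),
            if_pos (Finset.mem_univ i), OldCStarModule.inner_op_smul_right]
  -- `‖w‖ ≤ 1`
  have hww : (inner A w w : A) = ∑ i, star (a i) * ((inner A (v i) (v i) : A) * a i) := by
    rw [hwdef, OldCStarModule.inner_sum_left]
    refine Finset.sum_congr rfl fun i _ => ?_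
    rw [OldCStarModule.inner_sum_right, Finset.sum_eq_single i (fun j _ hji => by
        rw [OldCStarModule.inner_op_smul_left, OldCStarModule.inner_op_smul_right, horth i j (Ne.symm hji), zero_mul, mul_zero])
      (by simp), OldCStarModule.inner_op_smul_left, OldCStarModule.inner_op_smul_right]
  have hw0 : (0 : A) ≤ ∑ i, star (a i) * ((inner A (v i) (v i) : A) * a i) := by
    refine Finset.sum_nonneg fun i _ => ?_
    have h : (inner A ((v i) <• a i) ((v i) <• a i) : A) =
        star (a i) * ((inner A (v i) (v i) : A) * a i) := by
      rw [OldCStarModule.inner_op_smul_left, OldCStarModule.inner_op_smul_right]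
    rw [← h]
    exact OldCStarModule.inner_self_nonneg
  have hwle : ∑ i, star (a i) * ((inner A (v i) (v i) : A) * a i) ≤ ∑ i, star (a i) * a i :=
    Finset.sum_le_sum fun i _ => conj_proj_le (hsa i) (hidem i) (a i)
  have hw1 : ‖w‖ ≤ 1 := by
    rw [OldCStarModule.norm_eq_sqrt_norm_inner_self (A := A), hww]
    refine Real.sqrt_le_one.mpr ?_
    calc ‖∑ i, star (a i) * ((inner A (v i) (v i) : A) * a i)‖ ≤ ‖∑ i, star (a i) * a i‖ :=
          CStarAlgebra.norm_le_norm_of_nonneg_of_le hw0 hwle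
      _ ≤ 1 := ha
  -- conclusion
  calc ‖∑ i, (inner A (x i) (v i) : A) * a i‖
      = ‖(inner A (∑ i, P' i (x i)) w : A)‖ := by rw [hyw]
    _ ≤ ‖∑ i, P' i (x i)‖ * ‖w‖ := OldCStarModule.norm_inner_le E
    _ ≤ ‖∑ i, P' i (x i)‖ * 1 := by gcongr
    _ = ‖∑ i, P' i (x i)‖ := mul_one _
    _ ≤ sSup S := le_csSup hbdd hmem
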